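/- Let γ be a nonzero real number, let c : ℕ → ℝ be given by c_{2m} = γ, c_{2m+1} = √(m+1), and let p_n : ℝ → ℝ be defined by p_{2n}(x) = ((−γ)^n/√(n!))·C_n(x²; γ²) and p_{2n+1}(x) = −((−γ)^{n−1}/√(n!))·x·C_n(x²−1; γ²). For a real number y, define the complex sequence u(y) : ℕ → ℂ by u(y)_n = i^n·p_n(y). Then u(y) is a formal eigenvector of the momentum operator p̂ with eigenvalue y: for all n ≥ 0, i·c_{n−1}·u(y)_{n−1} − i·c_n·u(y)_{n+1} = y·u(y)_n, where the term with index −1 is omitted. -/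

import Mathlib

/-- The Charlier polynomial `C_n(x; a) = ₂F₀(-n, -x; —; -1/a)
  = ∑_{k=0}^{n} (n choose k)·x(x-1)⋯(x-k+1)·(-1/a)^k`,
  regarded as a polynomial function of a real variable `x`. -/
noncomputable def charlier (a : ℝ) (n : ℕ) (x : ℝ) : ℝ :=
  ∑ k ∈ Finset.range (n + 1),
    (n.choose k : ℝ) * (∏ j ∈ Finset.range k, (x - (j : ℝ))) * (-1 / a) ^ k

/-! Writing `P_m = (-γ)^m/√m!·C_m(y²; γ²)` and `Q_m = -(-γ)^(m-1)/√m!·y·C_m(y²-1; γ²)`, the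
eigenvalue equation for `u(y)_n = i^n p_n(y)` reduces, after the phases `i^n` are absorbed, to the
real three-term recurrences `γ P_m + √(m+1) P_{m+1} = y Q_m` and
`√(m+1) Q_m + γ Q_{m+1} = y P_{m+1}`. These are the two difference equations of the Charlier
polynomials, in the degree `n` and in the variable `x`, each a consequence of Pascal's rule. -/

open Finset

lemma prod_range_succ_sub_natCast (x : ℝ) (k : ℕ) :
    ∏ j ∈ range (k + 1), (x - j) = x * ∏ j ∈ range k, (x - 1 - j) := by
  rw [prod_range_succ', Nat.cast_zero, sub_zero, mul_comm]
  congr 1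
  exact prod_congr rfl fun j _ => by push_cast; ring

lemma charlier_zero_left (a x : ℝ) : charlier a 0 x = 1 := by
  simp [charlier]

lemma charlier_eq_sum_range_add_two (a : ℝ) (n : ℕ) (x : ℝ) :
    charlier a n x =
      ∑ k ∈ range (n + 2), (n.choose k : ℝ) * (∏ j ∈ range k, (x - j)) * (-1 / a) ^ k := by
  rw [charlier, sum_range_succ _ (n + 1), Nat.choose_succ_self, Nat.cast_zero, zero_mul,
    zero_mul, add_zero]

lemma charlier_succ_sub_charlier (a : ℝ) (n : ℕ) (x : ℝ) :
    charlier a (n + 1) x - charlier a n x = -1 / a * x * charlier a n (x - 1) := by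
  rw [charlier_eq_sum_range_add_two a n x, charlier, ← sum_sub_distrib, sum_range_succ',
    charlier, mul_sum]
  simp only [Nat.choose_zero_right, sub_self, add_zero]
  refine sum_congr rfl fun j _ => ?_
  rw [Nat.choose_succ_succ, prod_range_succ_sub_natCast, pow_succ]
  push_cast
  ring

lemma charlier_succ_sub_charlier_sub_one (a : ℝ) (n : ℕ) (x : ℝ) :
    charlier a (n + 1) x - charlier a (n + 1) (x - 1) =
      -1 / a * (n + 1) * charlier a n (x - 1) := by
  rw [charlier, charlier, ← sum_sub_distrib, sum_range_succ', charlier, mul_sum]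
  simp only [range_zero, prod_empty, sub_self, add_zero]
  refine sum_congr rfl fun j _ => ?_
  have hpascal : ((n + 1).choose (j + 1) : ℝ) * (j + 1) = (n + 1) * n.choose j := by
    exact_mod_cast (Nat.add_one_mul_choose_eq n j).symm
  rw [prod_range_succ_sub_natCast, prod_range_succ, pow_succ]
  linear_combination (-1 / a) ^ j * (∏ i ∈ range j, (x - 1 - i)) * (-1 / a) * hpascal

lemma sqrt_factorial_succ (n : ℕ) :
    √((n + 1).factorial : ℝ) = √((n : ℝ) + 1) * √(n.factorial : ℝ) := by
  rw [Nat.factorial_succ, Nat.cast_mul, Nat.cast_succ, Real.sqrt_mul (by positivity)]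

section ThreeTermRecurrence

variable {γ : ℝ} {p : ℕ → ℝ → ℝ}

lemma three_term_recurrence_zero (hγ : γ ≠ 0)
    (hpeven : ∀ (n : ℕ) (x : ℝ),
      p (2 * n) x = ((-γ) ^ n / √(n.factorial : ℝ)) * charlier (γ ^ 2) n (x ^ 2))
    (hpodd : ∀ (n : ℕ) (x : ℝ),
      p (2 * n + 1) x =
        -(((-γ) ^ ((n : ℤ) - 1) / √(n.factorial : ℝ)) * x * charlier (γ ^ 2) n (x ^ 2 - 1)))
    (x : ℝ) : γ * p 1 x = x * p 0 x := by
  have h0 := hpeven 0 x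
  have h1 := hpodd 0 x
  norm_num [charlier_zero_left] at h0 h1
  rw [h0, h1]
  field_simp

lemma three_term_recurrence_even (hγ : γ ≠ 0)
    (hpeven : ∀ (n : ℕ) (x : ℝ),
      p (2 * n) x = ((-γ) ^ n / √(n.factorial : ℝ)) * charlier (γ ^ 2) n (x ^ 2))
    (hpodd : ∀ (n : ℕ) (x : ℝ),
      p (2 * n + 1) x =
        -(((-γ) ^ ((n : ℤ) - 1) / √(n.factorial : ℝ)) * x * charlier (γ ^ 2) n (x ^ 2 - 1)))
    (m : ℕ) (x : ℝ) :
    γ * p (2 * m) x + √((m : ℝ) + 1) * p (2 * (m + 1)) x = x * p (2 * m + 1) x := by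
  rw [hpeven, hpeven, hpodd, sqrt_factorial_succ, zpow_sub_one₀ (neg_ne_zero.2 hγ), zpow_natCast]
  have hdiff := charlier_succ_sub_charlier (γ ^ 2) m (x ^ 2)
  have : √(m.factorial : ℝ) ≠ 0 := by positivity
  have : √((m : ℝ) + 1) ≠ 0 := by positivity
  field_simp at hdiff ⊢
  linear_combination -(-γ) ^ m * hdiff

lemma three_term_recurrence_odd (hγ : γ ≠ 0)
    (hpeven : ∀ (n : ℕ) (x : ℝ),
      p (2 * n) x = ((-γ) ^ n / √(n.factorial : ℝ)) * charlier (γ ^ 2) n (x ^ 2))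
    (hpodd : ∀ (n : ℕ) (x : ℝ),
      p (2 * n + 1) x =
        -(((-γ) ^ ((n : ℤ) - 1) / √(n.factorial : ℝ)) * x * charlier (γ ^ 2) n (x ^ 2 - 1)))
    (m : ℕ) (x : ℝ) :
    √((m : ℝ) + 1) * p (2 * m + 1) x + γ * p (2 * (m + 1) + 1) x = x * p (2 * (m + 1)) x := by
  rw [hpodd, hpodd, hpeven, sqrt_factorial_succ, zpow_sub_one₀ (neg_ne_zero.2 hγ),
    zpow_sub_one₀ (neg_ne_zero.2 hγ), zpow_natCast, zpow_natCast]
  have hdiff := charlier_succ_sub_charlier_sub_one (γ ^ 2) m (x ^ 2)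
  have hsqrt : √((m : ℝ) + 1) ^ 2 = m + 1 := Real.sq_sqrt (by positivity)
  have : √(m.factorial : ℝ) ≠ 0 := by positivity
  have : √((m : ℝ) + 1) ≠ 0 := by positivity
  field_simp at hdiff ⊢
  linear_combination (-γ) ^ m * x * hdiff + (-γ) ^ m * x * charlier (γ ^ 2) m (x ^ 2 - 1) * hsqrt

end ThreeTermRecurrence

open Complex in
-- `i·i^(n-1) = i^n = -i·i^(n+1)`, so the phases factor out of the eigenvalue equation.
lemma momentum_eigen_of_recurrence {c q : ℕ → ℝ} {y : ℝ} (h0 : c 0 * q 1 = y * q 0)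
    (hsucc : ∀ n, c n * q n + c (n + 1) * q (n + 2) = y * q (n + 1)) (n : ℕ) :
    (if n = 0 then 0 else I * (c (n - 1) : ℂ) * (I ^ (n - 1) * q (n - 1))) -
      I * (c n : ℂ) * (I ^ (n + 1) * q (n + 1)) = y * (I ^ n * q n) := by
  rcases n with _ | n
  · have h0' : (c 0 : ℂ) * q 1 = y * q 0 := by exact_mod_cast h0
    simp only [if_pos, pow_zero]
    linear_combination h0' - (c 0 : ℂ) * q 1 * I_sq
  · have hn' : (c n : ℂ) * q n + c (n + 1) * q (n + 2) = y * q (n + 1) := by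
      exact_mod_cast hsucc n
    simp only [if_neg (Nat.succ_ne_zero n), Nat.add_sub_cancel, pow_succ]
    linear_combination I ^ n * I * hn' - c (n + 1) * q (n + 2) * I ^ n * I * I_sq

/-- The sequence `u(y)_n = i^n·p_n(y)` is a formal eigenvector of the momentum operator
`(p̂f)(n) = i·c_{n-1}·f(n-1) - i·c_n·f(n+1)` with eigenvalue `y`:
`i·c_{n-1}·u(y)_{n-1} - i·c_n·u(y)_{n+1} = y·u(y)_n` for all `n ≥ 0`
(the term with index `-1` being omitted). -/
theorem momentum_eigenvector (γ : ℝ) (hγ : γ ≠ 0) (c : ℕ → ℝ)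
    (hc0 : ∀ m : ℕ, c (2 * m) = γ)
    (hc1 : ∀ m : ℕ, c (2 * m + 1) = Real.sqrt ((m : ℝ) + 1))
    (p : ℕ → ℝ → ℝ)
    (hpeven : ∀ (n : ℕ) (x : ℝ),
      p (2 * n) x = ((-γ) ^ n / Real.sqrt (n.factorial : ℝ)) * charlier (γ ^ 2) n (x ^ 2))
    (hpodd : ∀ (n : ℕ) (x : ℝ),
      p (2 * n + 1) x =
        -(((-γ) ^ ((n : ℤ) - 1) / Real.sqrt (n.factorial : ℝ)) * x *
          charlier (γ ^ 2) n (x ^ 2 - 1)))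
    (y : ℝ) (u : ℕ → ℂ)
    (hu : ∀ n : ℕ, u n = Complex.I ^ n * (p n y : ℂ)) :
    ∀ n : ℕ,
      (if n = 0 then 0 else Complex.I * (c (n - 1) : ℂ) * u (n - 1)) -
        Complex.I * (c n : ℂ) * u (n + 1) = (y : ℂ) * u n := by
  have hstep : ∀ n, c n * p n y + c (n + 1) * p (n + 2) y = y * p (n + 1) y := by
    intro n
    obtain ⟨m, rfl | rfl⟩ := Nat.even_or_odd' n
    · rw [hc0, hc1, show 2 * m + 2 = 2 * (m + 1) by ring]
      exact three_term_recurrence_even hγ hpeven hpodd m y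
    · rw [hc1, show 2 * m + 1 + 1 = 2 * (m + 1) by ring, hc0,
        show 2 * m + 1 + 2 = 2 * (m + 1) + 1 by ring]
      exact three_term_recurrence_odd hγ hpeven hpodd m y
  have hzero : c 0 * p 1 y = y * p 0 y := by
    rw [show c 0 = γ from hc0 0]
    exact three_term_recurrence_zero hγ hpeven hpodd y
  intro n
  simp only [hu]
  exact momentum_eigen_of_recurrence hzero hstep n
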